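/- arXiv:2504.16864 — 3 statements merged into one kernel-verified Lean document; each statement's English description precedes it below -/
import Mathlib

section
/- Let A ∈ ℝ^{d×d} with d ≥ 2. Then x^T A (y - x) = 0 for all x, y in the interior of the standard (d-1)-simplex if and only if A = c 1^T for some vector c ∈ ℝ^d (i.e., all columns of A are equal). -/
/-!
Subtracting the identity at `(x, y₁)` from the one at `(x, y₂)` shows that the row vector
`xᵀ A` annihilates every difference of interior points of the simplex. These differences include
multiples of every `eⱼ - eₖ`, so `xᵀ (A₍·ⱼ₎ - A₍·ₖ₎) = 0` for all interior `x`. A vector orthogonal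
to the whole open simplex is zero: it is constant by the same argument, and its pairing with a
point of the simplex is that constant. Hence all columns of `A` agree.
-/

open Finset Matrix

def openStdSimplex (ι : Type*) [Fintype ι] : Set (ι → ℝ) :=
  {x | (∀ i, 0 < x i) ∧ ∑ i, x i = 1}

namespace openStdSimplex

variable {ι : Type*} [Fintype ι]

theorem const_inv_card_mem [Nonempty ι] :
    (fun _ => (Fintype.card ι : ℝ)⁻¹) ∈ openStdSimplex ι := by
  have hcard : (0 : ℝ) < Fintype.card ι := by exact_mod_cast Fintype.card_pos
  refine ⟨fun _ => inv_pos.mpr hcard, ?_⟩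
  simp [Finset.card_univ, hcard.ne']

theorem exists_sub_eq_smul_single_sub_single [DecidableEq ι] (j k : ι) :
    ∃ p ∈ openStdSimplex ι, ∃ q ∈ openStdSimplex ι, ∃ t : ℝ, t ≠ 0 ∧
      p - q = t • (Pi.single j 1 - Pi.single k 1) := by
  have : Nonempty ι := ⟨j⟩
  have hn : (0 : ℝ) < Fintype.card ι := by exact_mod_cast Fintype.card_pos
  set q : ι → ℝ := fun _ => (Fintype.card ι : ℝ)⁻¹
  set ε : ℝ := (2 * Fintype.card ι : ℝ)⁻¹
  have hεq : ε < (Fintype.card ι : ℝ)⁻¹ := inv_strictAnti₀ hn (by linarith)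
  refine ⟨q + ε • (Pi.single j 1 - Pi.single k 1), ⟨fun i => ?_, ?_⟩, q,
    const_inv_card_mem, ε, by positivity, add_sub_cancel_left _ _⟩
  · have hε : 0 < ε := by positivity
    have hsingle : -1 ≤ (Pi.single j 1 - Pi.single k 1 : ι → ℝ) i := by
      simp only [Pi.sub_apply, Pi.single_apply]
      split_ifs <;> norm_num
    simp only [Pi.add_apply, Pi.smul_apply, smul_eq_mul, q]
    nlinarith [mul_le_mul_of_nonneg_left hsingle hε.le]
  · simp [q, Finset.sum_add_distrib, ← Finset.mul_sum, (const_inv_card_mem).2]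

theorem apply_eq_of_dotProduct_sub_eq_zero {w : ι → ℝ}
    (hw : ∀ p ∈ openStdSimplex ι, ∀ q ∈ openStdSimplex ι, w ⬝ᵥ (p - q) = 0) (j k : ι) :
    w j = w k := by
  classical
  obtain ⟨p, hp, q, hq, t, ht, hpq⟩ := exists_sub_eq_smul_single_sub_single j k
  have h := hw p hp q hq
  rw [hpq, dotProduct_smul, dotProduct_sub, dotProduct_single_one, dotProduct_single_one,
    smul_eq_mul, mul_eq_zero] at h
  exact sub_eq_zero.mp (h.resolve_left ht)

theorem eq_zero_of_dotProduct_eq_zero {w : ι → ℝ}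
    (hw : ∀ x ∈ openStdSimplex ι, w ⬝ᵥ x = 0) : w = 0 := by
  funext i
  have : Nonempty ι := ⟨i⟩
  have hdiff : ∀ p ∈ openStdSimplex ι, ∀ q ∈ openStdSimplex ι, w ⬝ᵥ (p - q) = 0 :=
    fun p hp q hq => by rw [dotProduct_sub, hw p hp, hw q hq, sub_zero]
  have hconst (j : ι) : w j = w i := apply_eq_of_dotProduct_sub_eq_zero hdiff j i
  obtain ⟨-, hsum⟩ := const_inv_card_mem (ι := ι)
  calc w i = w i * ∑ _ : ι, (Fintype.card ι : ℝ)⁻¹ := by rw [hsum, mul_one]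
    _ = w ⬝ᵥ fun _ => (Fintype.card ι : ℝ)⁻¹ := by simp only [dotProduct, hconst, Finset.mul_sum]
    _ = 0 := hw _ const_inv_card_mem
    _ = (0 : ι → ℝ) i := rfl

end openStdSimplex

theorem quadratic_form_zero_iff_rank_one_general (d : ℕ)
    (A : Matrix (Fin d) (Fin d) ℝ) :
    (∀ x y : Fin d → ℝ, (∀ i, 0 < x i) → ∑ i, x i = 1 →
      (∀ i, 0 < y i) → ∑ i, y i = 1 →
      x ⬝ᵥ (A *ᵥ (y - x)) = 0)
    ↔ ∃ c : Fin d → ℝ, ∀ i j, A i j = c i := by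
  constructor
  · intro H
    have hrow : ∀ x ∈ openStdSimplex (Fin d), ∀ j k, (x ᵥ* A) j = (x ᵥ* A) k := by
      refine fun x hx => openStdSimplex.apply_eq_of_dotProduct_sub_eq_zero fun p hp q hq => ?_
      rw [← dotProduct_mulVec, show p - q = (p - x) - (q - x) by abel, mulVec_sub,
        dotProduct_sub, H x p hx.1 hx.2 hp.1 hp.2, H x q hx.1 hx.2 hq.1 hq.2, sub_zero]
    have hcol (j k : Fin d) : (fun i => A i j - A i k) = 0 :=
      openStdSimplex.eq_zero_of_dotProduct_eq_zero fun x hx => by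
        have h := hrow x hx j k
        simp only [vecMul, dotProduct] at h
        rw [dotProduct_comm]
        simp only [dotProduct, mul_sub, sum_sub_distrib, h, sub_self]
    exact ⟨fun i => A i ⟨0, i.pos⟩, fun i j => sub_eq_zero.mp (congrFun (hcol j _) i)⟩
  · rintro ⟨c, hc⟩ x y - hxs - hys
    have hzero : A *ᵥ (y - x) = 0 := by
      funext i
      simp only [mulVec, dotProduct, hc, ← mul_sum, Pi.sub_apply, sum_sub_distrib, hys, hxs,
        sub_self, mul_zero, Pi.zero_apply]
    rw [hzero, dotProduct_zero]

/-- `xᵀ A (y - x) = 0` for all `x, y` in the interior of the standard simplex iff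
`A = c 1ᵀ` for some vector `c`, i.e. all columns of `A` are equal. -/
theorem quadratic_form_zero_iff_rank_one (d : ℕ) (hd : 2 ≤ d)
    (A : Matrix (Fin d) (Fin d) ℝ) :
    (∀ x y : Fin d → ℝ, (∀ i, 0 < x i) → ∑ i, x i = 1 →
      (∀ i, 0 < y i) → ∑ i, y i = 1 →
      x ⬝ᵥ (A *ᵥ (y - x)) = 0)
    ↔ ∃ c : Fin d → ℝ, ∀ i j, A i j = c i :=
  quadratic_form_zero_iff_rank_one_general d A
end

section
/- Let L : interior(Σ) → ℝ^d be twice continuously differentiable on the interior of the standard (d−1)-simplex with uniformly bounded second derivative, and suppose for all h, k in the interior of the simplex, h^T (L(k) − L(h)) = 0. Then for every k in the interior, the Jacobian J L(k) equals c(k) 1^T for some c(k) ∈ ℝ^d, i.e., all columns of the Jacobian are identical. -/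
open Finset

lemma tangent_deriv_zero (d : ℕ) (L : (Fin d → ℝ) → (Fin d → ℝ))
    (hsmooth : ContDiff ℝ 2 L)
    (horth : ∀ h k : Fin d → ℝ,
      (∀ i, 0 < h i) → ∑ i, h i = 1 → (∀ i, 0 < k i) → ∑ i, k i = 1 →
      ∑ i, h i * (L k i - L h i) = 0)
    (k : Fin d → ℝ) (hk : ∀ i, 0 < k i) (hk1 : ∑ i, k i = 1)
    (v : Fin d → ℝ) (hv : ∑ i, v i = 0)
    (h : Fin d → ℝ) (hh : ∀ i, 0 < h i) (hh1 : ∑ i, h i = 1) :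
    ∑ i, h i * (fderiv ℝ L k v) i = 0 := by
  have hLd : DifferentiableAt ℝ L k := (hsmooth.differentiable (by norm_num)).differentiableAt
  -- derivative of the curve t ↦ k + t • v
  have hcurve : HasDerivAt (fun t : ℝ => k + t • v) v 0 := by
    have : HasDerivAt (fun t : ℝ => t • v) ((1:ℝ) • v) 0 := (hasDerivAt_id 0).smul_const v
    simpa using this.const_add k
  have hcomp : HasDerivAt (fun t : ℝ => L (k + t • v)) (fderiv ℝ L k v) 0 := by
    have hL' : HasFDerivAt L (fderiv ℝ L k) (k + (0:ℝ) • v) := by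
      simpa using hLd.hasFDerivAt
    have := hL'.comp_hasDerivAt 0 hcurve
    exact this
  have hcompi : ∀ i, HasDerivAt (fun t : ℝ => L (k + t • v) i) ((fderiv ℝ L k v) i) 0 :=
    hasDerivAt_pi.mp hcomp
  set f : ℝ → ℝ := fun t => ∑ i, h i * (L (k + t • v) i - L h i) with hf
  have hfD : HasDerivAt f (∑ i, h i * (fderiv ℝ L k v) i) 0 :=
    HasDerivAt.fun_sum fun i _ => ((hcompi i).sub_const (L h i)).const_mul (h i)
  -- f is eventually zero near 0
  have hev : ∀ᶠ t : ℝ in nhds 0, ∀ i, 0 < (k + t • v) i := by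
    rw [Filter.eventually_all]
    intro i
    have hcont : Filter.Tendsto (fun t : ℝ => (k + t • v) i) (nhds 0) (nhds (k i)) := by
      have : Continuous fun t : ℝ => k i + t * v i := by continuity
      simpa using this.tendsto 0
    exact hcont.eventually (eventually_gt_nhds (hk i))
  have hfz : f =ᶠ[nhds 0] fun _ => 0 := by
    filter_upwards [hev] with t ht
    have hsum : ∑ i, (k + t • v) i = 1 := by
      simp [Finset.sum_add_distrib, hk1, ← Finset.mul_sum, hv]
    exact horth h (k + t • v) hh hh1 ht hsum
  have h0 : HasDerivAt f 0 0 :=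
    (hasDerivAt_const (0:ℝ) (0:ℝ)).congr_of_eventuallyEq hfz
  exact hfD.unique h0

/-- (Discrete characterization.) If `L : ℝ^d → ℝ^d` is twice continuously
differentiable with uniformly bounded second derivative and satisfies
`hᵀ (L(k) − L(h)) = 0` for all `h, k` in the interior of the standard simplex,
then at every such `k` all columns of the Jacobian of `L` are identical:
`J L(k) = c 1ᵀ` for some `c ∈ ℝ^d`. -/
theorem discrete_characterization (d : ℕ) (hd : 2 ≤ d)
    (L : (Fin d → ℝ) → (Fin d → ℝ))
    (hsmooth : ContDiff ℝ 2 L)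
    (hbdd : ∃ M : ℝ, ∀ x : Fin d → ℝ, ‖iteratedFDeriv ℝ 2 L x‖ ≤ M)
    (horth : ∀ h k : Fin d → ℝ,
      (∀ i, 0 < h i) → ∑ i, h i = 1 → (∀ i, 0 < k i) → ∑ i, k i = 1 →
      ∑ i, h i * (L k i - L h i) = 0) :
    ∀ k : Fin d → ℝ, (∀ i, 0 < k i) → ∑ i, k i = 1 →
      ∃ c : Fin d → ℝ, ∀ j : Fin d, fderiv ℝ L k (Pi.single j 1) = c := by
  intro k hk hk1
  have hdpos : (0:ℝ) < d := by positivity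
  have i0 : Fin d := ⟨0, by omega⟩
  refine ⟨fderiv ℝ L k (Pi.single i0 1), fun j => ?_⟩
  set v : Fin d → ℝ := Pi.single j 1 - Pi.single i0 1 with hvdef
  have hv : ∑ i, v i = 0 := by
    simp [hvdef, Finset.sum_sub_distrib, Finset.sum_pi_single]
  set w : Fin d → ℝ := fderiv ℝ L k v with hwdef
  have key : ∀ h : Fin d → ℝ, (∀ i, 0 < h i) → ∑ i, h i = 1 →
      ∑ i, h i * w i = 0 :=
    fun h hh hh1 => tangent_deriv_zero d L hsmooth horth k hk hk1 v hv h hh hh1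
  -- uniform distribution
  have hdne : (d:ℝ) ≠ 0 := ne_of_gt hdpos
  have husum : ∑ _i : Fin d, (1:ℝ)/d = 1 := by
    rw [Finset.sum_const, Finset.card_univ, Fintype.card_fin, nsmul_eq_mul,
      mul_one_div, div_self hdne]
  have hu : ∑ i, (1:ℝ)/d * w i = 0 := key _ (fun i => by positivity) husum
  -- all coordinates of w are equal
  have heq : ∀ a b : Fin d, w a = w b := by
    intro a b
    by_cases hab : a = b
    · rw [hab]
    · set h : Fin d → ℝ := fun m =>
        1/d + 1/(2*d) * ((Pi.single a 1 - Pi.single b 1 : Fin d → ℝ) m) with hhdef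
      have hhalf : 1/(2*(d:ℝ)) < 1/(d:ℝ) :=
        one_div_lt_one_div_of_lt hdpos (by linarith)
      have hhpos : ∀ i, 0 < h i := by
        intro i
        have p1 : 0 < 1/(d:ℝ) := by positivity
        have p2 : 0 < 1/(2*(d:ℝ)) := by positivity
        simp only [hhdef, Pi.sub_apply, Pi.single_apply]
        split_ifs with h1 h2 h3
        · exact absurd (h1.symm.trans h2) hab
        · linarith
        · linarith
        · linarith
      have hssum : ∑ i, (Pi.single a 1 - Pi.single b 1 : Fin d → ℝ) i = 0 := by
        simp [Pi.sub_apply, Finset.sum_sub_distrib, Finset.sum_pi_single]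
      have hhsum : ∑ i, h i = 1 := by
        simp only [hhdef]
        rw [Finset.sum_add_distrib, husum, ← Finset.mul_sum, hssum, mul_zero, add_zero]
      have hsw : ∑ i, (Pi.single a 1 - Pi.single b 1 : Fin d → ℝ) i * w i = w a - w b := by
        simp [Pi.sub_apply, Pi.single_apply, sub_mul, Finset.sum_sub_distrib, ite_mul,
          Finset.sum_ite_eq']
      have h1 := key h hhpos hhsum
      have hexp : ∑ i, h i * w i
          = ∑ i, (1:ℝ)/d * w i + 1/(2*d) * (w a - w b) := by
        rw [← hsw, Finset.mul_sum, ← Finset.sum_add_distrib]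
        refine Finset.sum_congr rfl fun i _ => ?_
        simp only [hhdef]; ring
      rw [hexp, hu, zero_add] at h1
      have h2d : (0:ℝ) < 1/(2*d) := by positivity
      have : w a - w b = 0 := (mul_eq_zero.mp h1).resolve_left (ne_of_gt h2d)
      linarith
  -- hence w = 0
  have hwsum : ∑ i, w i = 0 := by
    have := hu
    rw [← Finset.mul_sum] at this
    have hne : (1:ℝ)/d ≠ 0 := by positivity
    exact (mul_eq_zero.mp this).resolve_left hne

  have hw0 : ∀ i, w i = 0 := by
    intro i
    have : ∑ m : Fin d, w m = ∑ _m : Fin d, w i :=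
      Finset.sum_congr rfl fun m _ => heq m i
    rw [hwsum, Finset.sum_const] at this
    have : (d:ℝ) * w i = 0 := by
      simpa [nsmul_eq_mul] using this.symm
    exact (mul_eq_zero.mp this).resolve_left hdne
  have : fderiv ℝ L k v = 0 := funext hw0
  have hlin : fderiv ℝ L k (Pi.single j 1) - fderiv ℝ L k (Pi.single i0 1) = 0 := by
    rw [← (fderiv ℝ L k).map_sub]
    exact this
  ext i
  have := congrFun hlin i
  simpa [sub_eq_zero] using this
end

section
/- Let f(x₁,x₂) = x₁ + x₂, and let H, K be product probability measures on ℝ² with E_H[X₁] = E_H[X₂] = 0, E_K[X₁] = μ ≠ 0, E_K[X₂] = 0, all with finite variances. Then the FANOVA components satisfy L(f,H,{1})(x) = x₁ and L(f,K,{1})(x) = x₁ − μ, and hence E_H[L(f,K,{1})(X) − L(f,H,{1})(X)] = −μ ≠ 0. -/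
open MeasureTheory Finset

lemma pi_map_eval_fin2 (η : Fin 2 → Measure ℝ) [∀ i, IsProbabilityMeasure (η i)] (i : Fin 2) :
    (Measure.pi η).map (Function.eval i) = η i := by
  ext s hs
  rw [Measure.map_apply (measurable_pi_apply i) hs, Set.eval_preimage, Measure.pi_pi]
  fin_cases i <;>
    simp [Fin.prod_univ_two, Function.update]

lemma integral_eval_fin2 (η : Fin 2 → Measure ℝ) [∀ i, IsProbabilityMeasure (η i)] (i : Fin 2) :
    ∫ y : Fin 2 → ℝ, y i ∂Measure.pi η = ∫ t, t ∂(η i) := by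
  rw [← pi_map_eval_fin2 η i, integral_map (measurable_pi_apply i).aemeasurable
    (aestronglyMeasurable_id (α := ℝ))]

lemma integrable_eval_fin2 (η : Fin 2 → Measure ℝ) [∀ i, IsProbabilityMeasure (η i)] {i : Fin 2}
    (h : Integrable (fun t : ℝ => t) (η i)) :
    Integrable (fun y : Fin 2 → ℝ => y i) (Measure.pi η) := by
  have := (integrable_map_measure (aestronglyMeasurable_id (α := ℝ))
    (μ := Measure.pi η) (measurable_pi_apply i).aemeasurable).mp
  rw [pi_map_eval_fin2 η i] at this
  exact this h

lemma fanova_component (η : Fin 2 → Measure ℝ) [∀ i, IsProbabilityMeasure (η i)]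
    (hη2 : ∀ i, MemLp (fun t : ℝ => t) 2 (η i)) (x : Fin 2 → ℝ) :
    (∫ y : Fin 2 → ℝ, ((fun x : Fin 2 → ℝ => x 0 + x 1) (fun i => if i = 0 then x 0 else y i))
        ∂Measure.pi η)
      - ∫ y, ((fun x : Fin 2 → ℝ => x 0 + x 1) y) ∂Measure.pi η
      = x 0 - ∫ t, t ∂(η 0) := by
  have hint : ∀ i, Integrable (fun t : ℝ => t) (η i) := fun i =>
    (hη2 i).integrable (by norm_num)
  have h0 := integrable_eval_fin2 η (hint 0)
  have h1 := integrable_eval_fin2 η (hint 1)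
  have e1 : (∫ y : Fin 2 → ℝ, ((fun x : Fin 2 → ℝ => x 0 + x 1)
      (fun i => if i = 0 then x 0 else y i)) ∂Measure.pi η) = x 0 + ∫ t, t ∂(η 1) := by
    simp only [show ((1 : Fin 2) = 0) = False by simp, if_true, if_false]
    rw [integral_add (integrable_const _) h1, integral_const, probReal_univ,
      smul_eq_mul, one_mul, integral_eval_fin2]
  have e2 : (∫ y, ((fun x : Fin 2 → ℝ => x 0 + x 1) y) ∂Measure.pi η)
      = (∫ t, t ∂(η 0)) + ∫ t, t ∂(η 1) := by
    simp only
    rw [integral_add h0 h1, integral_eval_fin2, integral_eval_fin2]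
  rw [e1, e2]; ring


/-- (FANOVA misattribution example.) For `f(x) = x₁ + x₂` and independent covariates
with `E_H[X₁] = E_H[X₂] = 0`, `E_K[X₁] = μ ≠ 0`, `E_K[X₂] = 0`, the FANOVA singleton
components for coordinate 1 are `L(f,H,{1})(x) = x₁` and `L(f,K,{1})(x) = x₁ − μ`,
hence `E_H[L(f,K,{1}) − L(f,H,{1})] = −μ ≠ 0`. -/
theorem fanova_misattribution_example
    (η ξ : Fin 2 → Measure ℝ)
    [∀ i, IsProbabilityMeasure (η i)] [∀ i, IsProbabilityMeasure (ξ i)]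
    (hη2 : ∀ i, MemLp (fun t : ℝ => t) 2 (η i))
    (hξ2 : ∀ i, MemLp (fun t : ℝ => t) 2 (ξ i))
    (μ : ℝ) (hμ : μ ≠ 0)
    (hηm : ∀ i, ∫ t, t ∂(η i) = 0)
    (hξm0 : ∫ t, t ∂(ξ 0) = μ) (hξm1 : ∫ t, t ∂(ξ 1) = 0)
    (f : (Fin 2 → ℝ) → ℝ) (hf : f = fun x => x 0 + x 1)
    (LH1 LK1 : (Fin 2 → ℝ) → ℝ)
    (hLH1 : ∀ x, LH1 x =
      (∫ y, f (fun i => if i = 0 then x 0 else y i) ∂Measure.pi η)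
        - ∫ y, f y ∂Measure.pi η)
    (hLK1 : ∀ x, LK1 x =
      (∫ y, f (fun i => if i = 0 then x 0 else y i) ∂Measure.pi ξ)
        - ∫ y, f y ∂Measure.pi ξ) :
    (∀ x, LH1 x = x 0) ∧ (∀ x, LK1 x = x 0 - μ) ∧
    (∫ x, (LK1 x - LH1 x) ∂Measure.pi η = -μ) ∧ -μ ≠ 0 := by
  subst hf
  have hH : ∀ x, LH1 x = x 0 := by
    intro x; rw [hLH1 x, fanova_component η hη2 x, hηm 0, sub_zero]
  have hK : ∀ x, LK1 x = x 0 - μ := by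
    intro x; rw [hLK1 x, fanova_component ξ hξ2 x, hξm0]
  refine ⟨hH, hK, ?_, neg_ne_zero.mpr hμ⟩
  have : (fun x : Fin 2 → ℝ => LK1 x - LH1 x) = fun _ => -μ := by
    funext x; rw [hH x, hK x]; ring
  rw [this, integral_const, probReal_univ, one_smul]
end
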